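/- arXiv:1510.07710 — 2 statements merged into one kernel-verified Lean document; each statement's English description precedes it below -/
import Mathlib

section
/- Let G be a countable group and let μ be an invariant random subgroup of G, i.e., a Borel probability measure on the space of subgroups S(G) that is invariant under the conjugation action of G. Then μ-almost every subgroup H ≤ G is recurrent. -/
open MeasureTheory
open scoped Classical

/-- The characteristic function of a subgroup `H ≤ G`, as an element of the
product space `{0,1}^G` (with `Bool` playing the role of `{0,1}`). -/
noncomputable def subgroupChar {G : Type*} [Group G] (H : Subgroup G) : G → Bool :=
  fun g => decide (g ∈ H)

/-- The topology on the space of subgroups of `G`, induced from the product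
topology on `{0,1}^G` (with `{0,1}` discrete) via characteristic functions. -/
noncomputable instance subgroupSpaceTopology (G : Type*) [Group G] :
    TopologicalSpace (Subgroup G) :=
  TopologicalSpace.induced subgroupChar inferInstance

/-- The Borel σ-algebra on the space of subgroups of `G`. -/
noncomputable instance subgroupSpaceMeasurable (G : Type*) [Group G] :
    MeasurableSpace (Subgroup G) :=
  borel (Subgroup G)

/-- The conjugate `gHg⁻¹` of a subgroup `H ≤ G` by an element `g ∈ G`. -/
def conjSubgroup {G : Type*} [Group G] (g : G) (H : Subgroup G) : Subgroup G :=
  Subgroup.map (MulAut.conj g).toMonoidHom H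

/-- A subgroup `H ≤ G` is recurrent if for every `g ∈ G` and every finite subset
`F ⊆ G` there are infinitely many `n ∈ ℕ` with `H ∩ F = gⁿHg⁻ⁿ ∩ F`. -/
def Recurrent {G : Type*} [Group G] (H : Subgroup G) : Prop :=
  ∀ g : G, ∀ F : Set G, F.Finite →
    {n : ℕ | (H : Set G) ∩ F = (conjSubgroup (g ^ n) H : Set G) ∩ F}.Infinite

instance (G : Type*) [Group G] : BorelSpace (Subgroup G) := ⟨rfl⟩

lemma subgroupChar_continuous {G : Type*} [Group G] :
    Continuous (subgroupChar (G := G)) := continuous_induced_dom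

lemma mem_conjSubgroup {G : Type*} [Group G] (g x : G) (H : Subgroup G) :
    x ∈ conjSubgroup g H ↔ g⁻¹ * x * g ∈ H := by
  simp only [conjSubgroup, Subgroup.mem_map, MulEquiv.coe_toMonoidHom, MulAut.conj_apply]
  constructor
  · rintro ⟨y, hy, rfl⟩; simpa [mul_assoc] using hy
  · intro h; exact ⟨g⁻¹ * x * g, h, by group⟩

lemma conjSubgroup_iterate {G : Type*} [Group G] (g : G) (H : Subgroup G) (n : ℕ) :
    (conjSubgroup g)^[n] H = conjSubgroup (g ^ n) H := by
  induction n with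
  | zero => ext x; simp [mem_conjSubgroup]
  | succ n ih =>
    rw [Function.iterate_succ_apply', ih]
    ext x
    simp only [mem_conjSubgroup, pow_succ', mul_inv_rev, mul_assoc]

lemma continuous_conjSubgroup {G : Type*} [Group G] (g : G) :
    Continuous (conjSubgroup (G := G) g) := by
  rw [continuous_induced_rng]
  have : subgroupChar ∘ conjSubgroup (G := G) g =
      fun H x => subgroupChar H (g⁻¹ * x * g) := by
    funext H x
    simp [subgroupChar, mem_conjSubgroup]
  rw [this]
  exact continuous_pi fun x => (continuous_apply (g⁻¹ * x * g)).comp subgroupChar_continuous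

lemma measurableSet_memSubgroup {G : Type*} [Group G] [Countable G] (x : G) :
    MeasurableSet {K : Subgroup G | x ∈ K} := by
  have h : {K : Subgroup G | x ∈ K} = subgroupChar ⁻¹' {f : G → Bool | f x = true} := by
    ext K; simp [subgroupChar]
  rw [h]
  have hm : MeasurableSet ((fun f : G → Bool => f x) ⁻¹' {true}) :=
    (measurable_pi_apply x) (MeasurableSet.singleton true)
  exact subgroupChar_continuous.measurable hm

lemma measurableSet_interF (G : Type*) [Group G] [Countable G] (F A : Finset G)
    (hA : (A : Set G) ⊆ (F : Set G)) :
    MeasurableSet {K : Subgroup G | (K : Set G) ∩ ↑F = ↑A} := by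
  have h : {K : Subgroup G | (K : Set G) ∩ ↑F = ↑A} =
      ⋂ x ∈ F, {K : Subgroup G | x ∈ K ↔ x ∈ A} := by
    ext K
    simp only [Set.mem_setOf_eq, Set.mem_iInter]
    constructor
    · intro h x hx
      constructor
      · intro hK
        have : x ∈ (K : Set G) ∩ ↑F := ⟨hK, by simpa using hx⟩
        rw [h] at this; simpa using this
      · intro hxA
        have : x ∈ (↑A : Set G) := by simpa using hxA
        rw [← h] at this; exact this.1
    · intro h
      ext x
      simp only [Set.mem_inter_iff, SetLike.mem_coe, Finset.mem_coe]
      constructor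
      · rintro ⟨h1, h2⟩; exact (h x h2).1 h1
      · intro hxA
        have hxF : x ∈ F := by simpa using hA (by simpa using hxA)
        exact ⟨(h x hxF).2 hxA, hxF⟩
  rw [h]
  refine MeasurableSet.biInter F.countable_toSet fun x _ => ?_
  by_cases hx : x ∈ A
  · simpa [hx] using measurableSet_memSubgroup (G := G) x
  · have : {K : Subgroup G | x ∈ K ↔ x ∈ A} = {K : Subgroup G | x ∈ K}ᶜ := by
      ext K; simp [hx]
    rw [this]; exact (measurableSet_memSubgroup x).compl


lemma key_recurrence {G : Type*} [Group G] [Countable G]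
    (μ : Measure (Subgroup G)) [IsProbabilityMeasure μ]
    (hinv : ∀ g : G, Measure.map (conjSubgroup g) μ = μ) (g : G) (F A : Finset G) :
    ∀ᵐ (H : Subgroup G) ∂μ, ((H : Set G) ∩ ↑F = ↑A →
      {n : ℕ | ((conjSubgroup (g ^ n) H : Subgroup G) : Set G) ∩ ↑F = ↑A}.Infinite) := by
  by_cases hA : (A : Set G) ⊆ (F : Set G)
  · have hmp : MeasurePreserving (conjSubgroup g) μ μ :=
      ⟨(continuous_conjSubgroup g).measurable, hinv g⟩
    have hS := measurableSet_interF G F A hA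
    have h := hmp.conservative.ae_mem_imp_frequently_image_mem hS.nullMeasurableSet
    filter_upwards [h] with H hH hHF
    have h2 := hH hHF
    rw [Nat.frequently_atTop_iff_infinite] at h2
    refine h2.mono fun n hn => ?_
    simpa [conjSubgroup_iterate] using hn
  · refine ae_of_all _ fun H hH => absurd ?_ hA
    rw [← hH]; exact Set.inter_subset_right

/-- If `G` is a countable group and `μ` is an invariant random subgroup of `G`
(i.e., a Borel probability measure on the space of subgroups of `G` invariant
under the conjugation action), then `μ`-almost every subgroup of `G` is
recurrent. -/
theorem irs_ae_recurrent (G : Type*) [Group G] [Countable G]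
    (μ : Measure (Subgroup G)) [IsProbabilityMeasure μ]
    (hinv : ∀ g : G, Measure.map (conjSubgroup g) μ = μ) :
    ∀ᵐ H ∂μ, Recurrent H := by
  have all : ∀ᵐ (H : Subgroup G) ∂μ, ∀ g : G, ∀ F A : Finset G, ((H : Set G) ∩ ↑F = ↑A →
      {n : ℕ | ((conjSubgroup (g ^ n) H : Subgroup G) : Set G) ∩ ↑F = ↑A}.Infinite) :=
    ae_all_iff.mpr fun g => ae_all_iff.mpr fun F => ae_all_iff.mpr fun A =>
      key_recurrence μ hinv g F A
  filter_upwards [all] with H hH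
  intro g F hF
  set Fs := hF.toFinset with hFsdef
  set A : Finset G := Fs.filter (fun x => x ∈ H) with hAdef
  have hHA : (H : Set G) ∩ ↑Fs = ↑A := by
    ext x
    simp [hAdef, and_comm]
  have hFs : (Fs : Set G) = F := hF.coe_toFinset
  refine (hH g Fs A hHA).mono fun n hn => ?_
  rw [← hFs, hHA]; exact hn.symm
end

section
/- Let a group G act by isometries on a δ-hyperbolic metric space (S, d) and let H ≤ G be a recurrent subgroup. Suppose there exist f ∈ H, a loxodromic element g ∈ G, a point s ∈ S, and a constant C ≥ 0 such that (fgⁿs, gⁿs)_s ≤ C and (fg⁻ⁿs, g⁻ⁿs)_s ≤ C for all n ∈ ℕ (this holds precisely when f fixes neither of the two limit points g⁺, g⁻ of g). Then H contains a loxodromic element. -/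
/-- The Gromov product `(x, y)_z = (d(x,z) + d(y,z) − d(x,y)) / 2` of two points
`x, y` of a metric space with respect to a base point `z`. -/
noncomputable def gromovProd {S : Type*} [MetricSpace S] (x y z : S) : ℝ :=
  (dist x z + dist y z - dist x y) / 2

/-- An element `g` of a group `G` acting on a metric space `S` is loxodromic if
for every point `s ∈ S` the orbit map `ℤ → S`, `n ↦ gⁿ • s`, is a
quasi-isometric embedding: there are `λ ≥ 1` and `c ≥ 0` with
`λ⁻¹ |m − n| − c ≤ d(gᵐ s, gⁿ s) ≤ λ |m − n| + c` for all `m, n ∈ ℤ`. -/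
def Loxodromic {G : Type*} (S : Type*) [Group G] [MetricSpace S] [MulAction G S]
    (g : G) : Prop :=
  ∀ s : S, ∃ lam c : ℝ, 1 ≤ lam ∧ 0 ≤ c ∧
    ∀ m n : ℤ,
      lam⁻¹ * |(m : ℝ) - (n : ℝ)| - c ≤ dist (g ^ m • s) (g ^ n • s) ∧
        dist (g ^ m • s) (g ^ n • s) ≤ lam * |(m : ℝ) - (n : ℝ)| + c

section GromovAux

variable {S : Type*} [MetricSpace S]

theorem gp_nonneg (x y z : S) : 0 ≤ gromovProd x y z := by
  have h := dist_triangle x z y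
  have h2 : dist z y = dist y z := dist_comm z y
  unfold gromovProd; linarith

theorem gp_comm (x y z : S) : gromovProd x y z = gromovProd y x z := by
  unfold gromovProd; rw [dist_comm x y]; ring

theorem gp_add (x y z : S) : gromovProd x y z + gromovProd x z y = dist y z := by
  unfold gromovProd; rw [dist_comm z y]; ring

theorem dist_eq_gp (x y z : S) :
    dist x y = dist x z + dist y z - 2 * gromovProd x y z := by
  unfold gromovProd; ring

theorem gp_move_fst (x x' y z : S) :
    gromovProd x y z ≤ gromovProd x' y z + dist x x' := by
  unfold gromovProd
  have h1 := dist_triangle x x' z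
  have h2 := dist_triangle x' x y
  have h3 : dist x' x = dist x x' := dist_comm x' x
  linarith

theorem gp_move_base (x y z z' : S) :
    gromovProd x y z ≤ gromovProd x y z' + dist z z' := by
  unfold gromovProd
  have h1 := dist_triangle x z' z
  have h2 := dist_triangle y z' z
  have h4 : dist z' z = dist z z' := dist_comm z' z
  linarith

theorem gp_smul {G : Type*} [Group G] [MulAction G S]
    (hiso : ∀ g : G, Isometry (fun x : S => g • x)) (a : G) (x y z : S) :
    gromovProd (a • x) (a • y) (a • z) = gromovProd x y z := by
  have h : ∀ p q : S, dist (a • p) (a • q) = dist p q := fun p q => (hiso a).dist_eq p q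
  unfold gromovProd; rw [h, h, h]

end GromovAux

theorem main_estimate {G S : Type*} [Group G] [MetricSpace S] [MulAction G S]
    (hiso : ∀ g : G, Isometry (fun x : S => g • x))
    (δ : ℝ) (hδ : 0 ≤ δ)
    (hhyp : ∀ x y z t : S,
      min (gromovProd x y t) (gromovProd y z t) - δ ≤ gromovProd x z t)
    (f a : G) (s : S) (C : ℝ) (hC : 0 ≤ C)
    (h1 : gromovProd (f • (a • s)) (a • s) s ≤ C)
    (h2 : gromovProd (f • (a⁻¹ • s)) (a⁻¹ • s) s ≤ C)
    (hD : 4 * dist s (f • s) + 4 * C + 6 * δ + 1 ≤ dist s (a • s)) :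
    2 * gromovProd ((a * f * a⁻¹ * f) • s) ((a * f * a⁻¹ * f)⁻¹ • s) s + 2 * δ + 1
      ≤ dist s ((a * f * a⁻¹ * f) • s) := by
  have hdist : ∀ (b : G) (p q : S), dist (b • p) (b • q) = dist p q :=
    fun b => (hiso b).dist_eq
  set A := dist s (f • s) with hAdef
  have hA : 0 ≤ A := dist_nonneg
  set u := a • s with hudef
  set v := a⁻¹ • s with hvdef
  set D := dist s u with hDdef
  have hgv : a • v = s := by rw [hvdef, smul_inv_smul]
  have hvs : dist s v = D := by
    have h := hdist a s v
    rw [hgv] at h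
    rw [hDdef, hudef, ← h, dist_comm]
  have hvs' : dist v s = D := by rw [dist_comm]; exact hvs
  -- distance from f•v to s
  have hfvs : D - A ≤ dist (f • v) s ∧ dist (f • v) s ≤ D + A := by
    have t0 : dist (f • v) (f • s) = dist v s := hdist f v s
    have t0' : dist v s = D := by rw [dist_comm]; exact hvs
    have t1 := dist_triangle (f • v) (f • s) s
    have t2 := dist_triangle (f • v) s (f • s)
    have t3 : dist s (f • s) = A := rfl
    have t4 : dist (f • s) s = A := dist_comm (f • s) s
    constructor <;> linarith
  -- w • s and the point P = a • (f • v)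
  have hP_eq : (a * f * a⁻¹) • s = a • (f • v) := by
    rw [mul_smul, mul_smul, hvdef]
  have hsP : 2 * D - A - 2 * C ≤ dist s (a • (f • v)) := by
    have e : dist s (a • (f • v)) = dist v (f • v) := by
      conv_lhs => rw [← hgv]
      exact hdist a v (f • v)
    have hd := dist_eq_gp (f • v) v s
    have hcomm : dist v (f • v) = dist (f • v) v := dist_comm _ _
    rw [e, hcomm, hd]
    linarith [h2, hfvs.1, hvs']
  have hp_eq : (a * f * a⁻¹ * f) • s = (a * f * a⁻¹) • (f • s) := by
    rw [mul_smul]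
  have hpP : dist ((a * f * a⁻¹ * f) • s) (a • (f • v)) = A := by
    rw [hp_eq, ← hP_eq, hdist, dist_comm]
  -- lower bound on L := dist s (w • s)
  have hL : 2 * D - 2 * A - 2 * C ≤ dist s ((a * f * a⁻¹ * f) • s) := by
    have t := dist_triangle s ((a * f * a⁻¹ * f) • s) (a • (f • v))
    rw [hpP] at t
    linarith
  -- Gromov product of P with u
  have hPu : D - C ≤ gromovProd (a • (f • v)) u s := by
    have e := gp_smul hiso a (f • v) s v
    rw [hgv] at e
    have hadd := gp_add (f • v) s v
    rw [hvs] at hadd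
    rw [hudef, e]
    linarith [h2]
  have hpu : D - C - A ≤ gromovProd ((a * f * a⁻¹ * f) • s) u s := by
    have t := gp_move_fst (a • (f • v)) ((a * f * a⁻¹ * f) • s) u s
    have hcomm : dist (a • (f • v)) ((a * f * a⁻¹ * f) • s) = A := by
      rw [dist_comm]; exact hpP
    rw [hcomm] at t
    linarith
  -- dist s (f⁻¹ • s) = A
  have hfi : dist s (f⁻¹ • s) = A := by
    have h := hdist f s (f⁻¹ • s)
    rw [smul_inv_smul] at h
    rw [← h, dist_comm]
  -- f⁻¹ • v
  have hfiv : gromovProd (f⁻¹ • v) v s ≤ C + A := by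
    have t := gp_move_base (f⁻¹ • v) v s (f⁻¹ • s)
    have e := gp_smul hiso f (f⁻¹ • v) v (f⁻¹ • s)
    rw [smul_inv_smul, smul_inv_smul] at e
    rw [← e] at t
    have hcomm : gromovProd v (f • v) s = gromovProd (f • v) v s := gp_comm _ _ _
    rw [hcomm] at t
    rw [hfi] at t
    linarith [h2]
  -- Q := a • (f⁻¹ • v)
  have hQu : D - C - A ≤ gromovProd (a • (f⁻¹ • v)) u s := by
    have e := gp_smul hiso a (f⁻¹ • v) s v
    rw [hgv] at e
    have hadd := gp_add (f⁻¹ • v) s v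
    rw [hvs] at hadd
    rw [hudef, e]
    linarith
  -- q = w⁻¹ • s = f⁻¹ • Q
  have hq_eq : (a * f * a⁻¹ * f)⁻¹ • s = f⁻¹ • (a • (f⁻¹ • v)) := by
    have e : (a * f * a⁻¹ * f)⁻¹ = f⁻¹ * (a * (f⁻¹ * a⁻¹)) := by group
    rw [e, mul_smul, mul_smul, mul_smul, hvdef]
  have hfi' : dist (f⁻¹ • s) s = A := by rw [dist_comm]; exact hfi
  have hqfu : D - C - 2 * A ≤ gromovProd ((a * f * a⁻¹ * f)⁻¹ • s) (f⁻¹ • u) s := by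
    have t := gp_move_base ((a * f * a⁻¹ * f)⁻¹ • s) (f⁻¹ • u) (f⁻¹ • s) s
    have e := gp_smul hiso f⁻¹ (a • (f⁻¹ • v)) u s
    rw [← hq_eq] at e
    rw [e] at t
    rw [hfi'] at t
    linarith
  -- (u, f⁻¹ u)_s is small
  have hC1 : gromovProd u (f⁻¹ • u) s ≤ C + A := by
    have t := gp_move_base u (f⁻¹ • u) s (f⁻¹ • s)
    have e := gp_smul hiso f⁻¹ (f • u) u s
    rw [inv_smul_smul] at e
    rw [e] at t
    rw [hfi] at t
    linarith [h1]
  -- hyperbolicity step 1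
  have hstep1 : gromovProd ((a * f * a⁻¹ * f) • s) (f⁻¹ • u) s ≤ C + A + δ := by
    have hh := hhyp (f⁻¹ • u) ((a * f * a⁻¹ * f) • s) u s
    have hcomm1 : gromovProd (f⁻¹ • u) u s = gromovProd u (f⁻¹ • u) s := gp_comm _ _ _
    have hcomm2 : gromovProd (f⁻¹ • u) ((a * f * a⁻¹ * f) • s) s
        = gromovProd ((a * f * a⁻¹ * f) • s) (f⁻¹ • u) s := gp_comm _ _ _
    by_contra hcon
    push_neg at hcon
    have hlt1 : C + A + δ < gromovProd (f⁻¹ • u) ((a * f * a⁻¹ * f) • s) s := by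
      rw [hcomm2]; exact hcon
    have hlt2 : C + A + δ < gromovProd ((a * f * a⁻¹ * f) • s) u s := by
      linarith [hpu, hD]
    have hmin := lt_min hlt1 hlt2
    rw [hcomm1] at hh
    linarith [hC1]
  -- hyperbolicity step 2
  have hstep2 : gromovProd ((a * f * a⁻¹ * f) • s) ((a * f * a⁻¹ * f)⁻¹ • s) s
      ≤ C + A + 2 * δ := by
    have hh := hhyp ((a * f * a⁻¹ * f) • s) ((a * f * a⁻¹ * f)⁻¹ • s) (f⁻¹ • u) s
    by_contra hcon
    push_neg at hcon
    have hlt2 : C + A + 2 * δ < gromovProd ((a * f * a⁻¹ * f)⁻¹ • s) (f⁻¹ • u) s := by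
      linarith [hqfu, hD]
    have hmin := lt_min hcon hlt2
    linarith [hstep1]
  linarith [hstep2, hL, hD]

theorem loxo_of_contraction {G S : Type*} [Group G] [MetricSpace S] [MulAction G S]
    (hiso : ∀ g : G, Isometry (fun x : S => g • x))
    (δ : ℝ) (hδ : 0 ≤ δ)
    (hhyp : ∀ x y z t : S,
      min (gromovProd x y t) (gromovProd y z t) - δ ≤ gromovProd x z t)
    (w : G) (s : S)
    (hbig : 2 * gromovProd (w • s) (w⁻¹ • s) s + 2 * δ + 1 ≤ dist s (w • s)) :
    Loxodromic S w := by
  have hdist : ∀ (a : G) (p q : S), dist (a • p) (a • q) = dist p q :=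
    fun a => (hiso a).dist_eq
  set K := gromovProd (w • s) (w⁻¹ • s) s with hKdef
  set L := dist s (w • s) with hLdef
  have hK0 : 0 ≤ K := gp_nonneg _ _ _
  have hL1 : 1 ≤ L := by linarith
  have hL0 : 0 ≤ L := by linarith
  have hstep : ∀ k : ℕ, dist ((w ^ k) • s) ((w ^ (k + 1)) • s) = L := by
    intro k
    have e : (w ^ (k + 1)) • s = (w ^ k) • (w • s) := by rw [pow_succ, mul_smul]
    rw [e, hdist]
  -- the products (w^{k+1} s, w^{k+3} s)_{w^{k+2} s} all equal K
  have hKk : ∀ k : ℕ,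
      gromovProd ((w ^ (k + 1)) • s) ((w ^ (k + 3)) • s) ((w ^ (k + 2)) • s) = K := by
    intro k
    have e1 : (w ^ (k + 1)) • s = (w ^ (k + 2)) • (w⁻¹ • s) := by
      rw [smul_smul]; congr 1; group
    have e2 : (w ^ (k + 3)) • s = (w ^ (k + 2)) • (w • s) := by
      rw [smul_smul]; congr 1; group
    nth_rewrite 1 [e1, e2]
    rw [gp_smul hiso, gp_comm]
  have hc : ∀ k : ℕ,
      gromovProd s ((w ^ (k + 2)) • s) ((w ^ (k + 1)) • s) ≤ K + δ := by
    intro k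
    induction k with
    | zero =>
      have e1 : s = (w ^ 1) • (w⁻¹ • s) := by rw [smul_smul]; group; rw [one_smul]
      have e2 : (w ^ (0 + 2)) • s = (w ^ 1) • (w • s) := by
        rw [smul_smul]; congr 1; group
      have e3 : (w ^ (0 + 1)) • s = (w ^ 1) • s := by norm_num
      nth_rewrite 1 [e1]
      rw [e2, e3, gp_smul hiso, gp_comm]
      linarith
    | succ k ih =>
      have h1 := hKk k
      have h2 := hhyp ((w ^ (k + 1)) • s) s ((w ^ (k + 3)) • s) ((w ^ (k + 2)) • s)
      rw [h1] at h2
      have h3 : gromovProd s ((w ^ (k + 1)) • s) ((w ^ (k + 2)) • s)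
          + gromovProd s ((w ^ (k + 2)) • s) ((w ^ (k + 1)) • s) = L := by
        have h5 := gp_add s ((w ^ (k + 1)) • s) ((w ^ (k + 2)) • s)
        rw [hstep (k + 1)] at h5
        exact h5
      have h4 : gromovProd ((w ^ (k + 1)) • s) s ((w ^ (k + 2)) • s)
          = gromovProd s ((w ^ (k + 1)) • s) ((w ^ (k + 2)) • s) := gp_comm _ _ _
      show gromovProd s ((w ^ (k + 3)) • s) ((w ^ (k + 2)) • s) ≤ K + δ
      by_contra hcon
      push_neg at hcon
      have hlt : K + δ < gromovProd ((w ^ (k + 1)) • s) s ((w ^ (k + 2)) • s) := by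
        rw [h4]; linarith
      have hmin := lt_min hlt hcon
      linarith
  -- lower bound on distances
  have hD : ∀ k : ℕ, (k : ℝ) ≤ dist s ((w ^ k) • s) := by
    intro k
    induction k with
    | zero => simp
    | succ k ih =>
      match k, ih with
      | 0, _ =>
        have : dist s ((w ^ 1) • s) = L := by rw [pow_one]
        rw [this]; norm_num; linarith
      | (j + 1), ih =>
        have hgp := hc j
        have hde := dist_eq_gp s ((w ^ (j + 2)) • s) ((w ^ (j + 1)) • s)
        have hd2 : dist ((w ^ (j + 2)) • s) ((w ^ (j + 1)) • s) = L := by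
          rw [dist_comm]; exact hstep (j + 1)
        rw [hd2] at hde
        show ((j + 2 : ℕ) : ℝ) ≤ dist s ((w ^ (j + 2)) • s)
        push_cast
        push_cast at ih
        linarith
  -- upper bound on distances
  have hU : ∀ k : ℕ, dist s ((w ^ k) • s) ≤ (k : ℝ) * L := by
    intro k
    induction k with
    | zero => simp
    | succ k ih =>
      have := dist_triangle s ((w ^ k) • s) ((w ^ (k + 1)) • s)
      rw [hstep k] at this
      push_cast
      linarith
  -- integer versions
  have hZ : ∀ k : ℤ, |(k : ℝ)| ≤ dist s ((w ^ k) • s) ∧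
      dist s ((w ^ k) • s) ≤ |(k : ℝ)| * L := by
    intro k
    obtain ⟨m, rfl | rfl⟩ := k.eq_nat_or_neg
    · rw [zpow_natCast]
      constructor
      · have := hD m; rw [Int.cast_natCast, abs_of_nonneg (by positivity)]; exact this
      · have := hU m; rw [Int.cast_natCast, abs_of_nonneg (by positivity)]; exact this
    · have e : dist s ((w ^ (-(m : ℤ))) • s) = dist s ((w ^ (m : ℕ)) • s) := by
        have h := hdist (w ^ (m : ℕ)) s ((w ^ (-(m : ℤ))) • s)
        rw [smul_smul] at h
        have e2 : (w ^ (m : ℕ)) * (w ^ (-(m : ℤ))) = 1 := by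
          rw [← zpow_natCast w m, ← zpow_add]
          simp
        rw [e2, one_smul] at h
        rw [← h, dist_comm]
      rw [e]
      have hcast : |((-(m : ℤ) : ℤ) : ℝ)| = (m : ℝ) := by
        push_cast; rw [abs_neg, abs_of_nonneg (by positivity)]
      rw [hcast]
      exact ⟨hD m, hU m⟩
  -- conclude
  intro s'
  refine ⟨max 1 L, 2 * dist s s', le_max_left _ _, by positivity, ?_⟩
  intro m n
  have key : dist ((w ^ m) • s') ((w ^ n) • s') = dist ((w ^ (m - n)) • s') s' := by
    have h := hdist (w ^ (-n)) ((w ^ m) • s') ((w ^ n) • s')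
    rw [smul_smul, smul_smul, ← zpow_add, ← zpow_add, neg_add_eq_sub,
      neg_add_cancel, zpow_zero, one_smul] at h
    rw [← h]
  have hb := hZ (m - n)
  have t3 : dist ((w ^ (m - n)) • s) ((w ^ (m - n)) • s') = dist s s' := hdist _ _ _
  have t1 := dist_triangle ((w ^ (m - n)) • s) ((w ^ (m - n)) • s') s'
  have t2 := dist_triangle ((w ^ (m - n)) • s') ((w ^ (m - n)) • s) s
  have t4 : dist ((w ^ (m - n)) • s') ((w ^ (m - n)) • s) = dist s s' := by
    rw [dist_comm, t3]
  have t5 : dist ((w ^ (m - n)) • s) s' ≥ dist ((w ^ (m - n)) • s) s - dist s s' :=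
    by have := dist_triangle ((w ^ (m - n)) • s) s' s; rw [dist_comm s' s] at this; linarith
  have hcast : |(m : ℝ) - (n : ℝ)| = |((m - n : ℤ) : ℝ)| := by push_cast; ring_nf
  have hds : dist s ((w ^ (m - n)) • s) = dist ((w ^ (m - n)) • s) s := dist_comm _ _
  have hds' : dist ((w ^ (m - n)) • s') s' ≥ dist ((w ^ (m - n)) • s) s - 2 * dist s s' := by
    linarith
  have hds'' : dist ((w ^ (m - n)) • s') s' ≤ dist ((w ^ (m - n)) • s) s + 2 * dist s s' := by
    have := dist_triangle ((w ^ (m - n)) • s') s s'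
    have t6 := dist_triangle ((w ^ (m - n)) • s') ((w ^ (m - n)) • s) s
    rw [t4] at t6
    have : dist ((w ^ (m - n)) • s') s' ≤ dist ((w ^ (m - n)) • s') s + dist s s' :=
      dist_triangle _ _ _
    linarith
  have hmaxpos : (0 : ℝ) < max 1 L := lt_of_lt_of_le one_pos (le_max_left _ _)
  have hinv : (max 1 L)⁻¹ ≤ 1 := by
    rw [inv_le_one_iff₀]; right; exact le_max_left _ _
  have habs : (0 : ℝ) ≤ |((m - n : ℤ) : ℝ)| := abs_nonneg _
  constructor
  · rw [key, hcast]
    have h1 : (max 1 L)⁻¹ * |((m - n : ℤ) : ℝ)| ≤ |((m - n : ℤ) : ℝ)| := by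
      calc (max 1 L)⁻¹ * |((m - n : ℤ) : ℝ)| ≤ 1 * |((m - n : ℤ) : ℝ)| :=
            mul_le_mul_of_nonneg_right hinv habs
        _ = |((m - n : ℤ) : ℝ)| := one_mul _
    linarith [hb.1]
  · rw [key, hcast]
    have h1 : |((m - n : ℤ) : ℝ)| * L ≤ max 1 L * |((m - n : ℤ) : ℝ)| := by
      rw [mul_comm]
      exact mul_le_mul_of_nonneg_right (le_max_right _ _) habs
    linarith [hb.2]

/-- Let `G` act by isometries on a `δ`-hyperbolic metric space `S` and let
`H ≤ G` be a recurrent subgroup. Suppose there are `f ∈ H`, a loxodromic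
element `g ∈ G`, a point `s ∈ S`, and `C ≥ 0` such that `(f gⁿ s, gⁿ s)_s ≤ C`
and `(f g⁻ⁿ s, g⁻ⁿ s)_s ≤ C` for all `n ∈ ℕ`. Then `H` contains a loxodromic
element. -/
theorem recurrent_contains_loxodromic {G S : Type*} [Group G] [MetricSpace S]
    [MulAction G S]
    (hiso : ∀ g : G, Isometry (fun x : S => g • x))
    (δ : ℝ) (hδ : 0 ≤ δ)
    (hhyp : ∀ x y z t : S,
      min (gromovProd x y t) (gromovProd y z t) - δ ≤ gromovProd x z t)
    (H : Subgroup G) (hH : Recurrent H)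
    (f : G) (hf : f ∈ H) (g : G) (hg : Loxodromic S g) (s : S)
    (C : ℝ) (hC : 0 ≤ C)
    (h1 : ∀ n : ℕ, gromovProd ((f * g ^ n) • s) (g ^ n • s) s ≤ C)
    (h2 : ∀ n : ℕ, gromovProd ((f * (g ^ n)⁻¹) • s) ((g ^ n)⁻¹ • s) s ≤ C) :
    ∃ h ∈ H, Loxodromic S h := by
  obtain ⟨lam, cc, hlam, hcc, hqi⟩ := hg s
  have hlam0 : (0 : ℝ) < lam := lt_of_lt_of_le one_pos hlam
  have hT := hH g⁻¹ {f} (Set.finite_singleton f)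
  obtain ⟨n, hnT, hn⟩ :=
    hT.exists_gt ⌈lam * (cc + (4 * dist s (f • s) + 4 * C + 6 * δ + 1))⌉₊
  have hfmem : f ∈ conjSubgroup (g⁻¹ ^ n) H := by
    have hx : f ∈ (H : Set G) ∩ {f} := ⟨hf, rfl⟩
    rw [hnT] at hx
    exact hx.1
  obtain ⟨h0, hh0H, hh0⟩ := Subgroup.mem_map.mp hfmem
  have e : g ^ n * f * (g ^ n)⁻¹ = h0 := by
    rw [← hh0]
    simp only [MulEquiv.coe_toMonoidHom, MulAut.conj_apply]
    group
  have hkeyH : g ^ n * f * (g ^ n)⁻¹ ∈ H := e ▸ hh0H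
  refine ⟨g ^ n * f * (g ^ n)⁻¹ * f, H.mul_mem hkeyH hf, ?_⟩
  apply loxo_of_contraction hiso δ hδ hhyp
  apply main_estimate hiso δ hδ hhyp f (g ^ n) s C hC
  · rw [← mul_smul]; exact h1 n
  · rw [← mul_smul]; exact h2 n
  · have h := (hqi (n : ℤ) 0).1
    rw [zpow_natCast, zpow_zero, one_smul, Int.cast_natCast, Int.cast_zero,
      sub_zero, abs_of_nonneg (by positivity : (0 : ℝ) ≤ (n : ℝ))] at h
    have hceil : lam * (cc + (4 * dist s (f • s) + 4 * C + 6 * δ + 1)) ≤ (n : ℝ) := by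
      refine le_trans (Nat.le_ceil _) ?_
      exact_mod_cast hn.le
    have hkey : cc + (4 * dist s (f • s) + 4 * C + 6 * δ + 1) ≤ lam⁻¹ * (n : ℝ) := by
      have h2' : lam⁻¹ * (lam * (cc + (4 * dist s (f • s) + 4 * C + 6 * δ + 1)))
          ≤ lam⁻¹ * (n : ℝ) :=
        mul_le_mul_of_nonneg_left hceil (by positivity)
      rwa [← mul_assoc, inv_mul_cancel₀ (ne_of_gt hlam0), one_mul] at h2'
    have hcomm : dist (g ^ (n : ℕ) • s) s = dist s (g ^ (n : ℕ) • s) := dist_comm _ _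
    rw [hcomm] at h
    linarith
end
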